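/- Let λ, μ > 0, L = diag(μ, μλ²), and let k(x) = k(x; 0) be the fundamental singular strain at the origin with Burgers modulus b, and W(h) = (1/2) h · Lh. Then for 0 < R' < R, ∫_{E_R(0)\closure(E_{R'}(0))} W(k) dx = (μλb²/4π) log(R/R'); consequently, for any bounded open Ω containing closure(E_R(0)), the quantity (μλb²/4π) log R + ∫_{Ω \ E_R(0)} W(k) dx is independent of R ∈ (0, R₀) for any R₀ with closure(E_{R₀}(0)) ⊂ Ω. -/

import Mathlib

open MeasureTheory

/-- The fundamental singular strain of a screw dislocation at the origin with Burgers
modulus `b`, for Lamé modulus `lam`: `k(x) = (bλ/(2π(λ²x₁² + x₂²)))·(−x₂, x₁)`. -/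
noncomputable def kfun0 (lam b : ℝ) (x : ℝ × ℝ) : ℝ × ℝ :=
  (b * lam / (2 * Real.pi * (lam ^ 2 * x.1 ^ 2 + x.2 ^ 2)) * (-x.2),
   b * lam / (2 * Real.pi * (lam ^ 2 * x.1 ^ 2 + x.2 ^ 2)) * x.1)

/-- The open ellipse `E_r(0) = {x : x₁² + (x₂/λ)² < r²}`. -/
def ellipse0 (lam r : ℝ) : Set (ℝ × ℝ) :=
  {x : ℝ × ℝ | x.1 ^ 2 + (x.2 / lam) ^ 2 < r ^ 2}

/-- The energy density `W(k) = (1/2) k·Lk` with `L = diag(μ, μλ²)`. -/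
noncomputable def Wk (lam mu b : ℝ) (x : ℝ × ℝ) : ℝ :=
  (1 / 2 : ℝ) * ((kfun0 lam b x).1 * (mu * (kfun0 lam b x).1)
    + (kfun0 lam b x).2 * (mu * lam ^ 2 * (kfun0 lam b x).2))

/-!
In elliptic polar coordinates `x = (r cos θ, λ r sin θ)`, with Jacobian `λ r`, the energy
density is `W(k) = μ b² / (8π² r²)`, so the energy of the elliptic annulus `R' < r < R` is
`∫∫ μ λ b² / (8π² r) dθ dr = (μλb²/4π) log (R/R')`. The boundary ellipses are Lebesgue-null, so
it does not matter which boundary pieces belong to the annulus. Since `W(k)` is continuous away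
from the origin it is integrable on `Ω \ E_R`, and splitting
`Ω \ E_{R'} = (Ω \ E_R) ∪ (E_R \ E_{R'})` shows that enlarging `R` moves exactly
`(μλb²/4π) log (R/R')` of energy from the integral into the logarithm.
-/

open Set Real

lemma measure_prod_null_of_countable_slices {α β : Type*} [MeasurableSpace α]
    [MeasurableSpace β] (μ : Measure α) (ν : Measure β) [SFinite ν] [NullSingletonClass ν]
    {s : Set (α × β)} (hs : MeasurableSet s) (h : ∀ a, (Prod.mk a ⁻¹' s).Countable) :
    μ.prod ν s = 0 :=
  (Measure.measure_prod_null hs).2 (Filter.Eventually.of_forall fun a => (h a).measure_zero ν)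

noncomputable def ellipticNormSq (lam : ℝ) (x : ℝ × ℝ) : ℝ := x.1 ^ 2 + (x.2 / lam) ^ 2

lemma ellipse0_eq (lam r : ℝ) : ellipse0 lam r = {x | ellipticNormSq lam x < r ^ 2} := rfl

lemma continuous_ellipticNormSq (lam : ℝ) : Continuous (ellipticNormSq lam) := by
  unfold ellipticNormSq; fun_prop

lemma isOpen_ellipse0 (lam r : ℝ) : IsOpen (ellipse0 lam r) :=
  isOpen_lt (continuous_ellipticNormSq lam) continuous_const

lemma closure_ellipse0_subset (lam r : ℝ) :
    closure (ellipse0 lam r) ⊆ {x | ellipticNormSq lam x ≤ r ^ 2} :=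
  closure_minimal (fun _ hx => le_of_lt (α := ℝ) hx)
    (isClosed_le (continuous_ellipticNormSq lam) continuous_const)

lemma ellipse0_mono {lam r r' : ℝ} (hr' : 0 ≤ r') (h : r' ≤ r) : ellipse0 lam r' ⊆ ellipse0 lam r :=
  fun _ hx => hx.trans_le (pow_le_pow_left₀ hr' h 2)

lemma zero_mem_ellipse0 {lam r : ℝ} (hr : 0 < r) : (0 : ℝ × ℝ) ∈ ellipse0 lam r := by
  simp [ellipse0, hr]

lemma mem_sqrt_pair_of_sq_eq {z d : ℝ} (h : z ^ 2 = d) : z ∈ ({√d, -√d} : Set ℝ) := by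
  rw [← h, sqrt_sq_eq_abs]
  rcases abs_choice z with hz | hz <;> simp [hz]

lemma volume_ellipticNormSq_eq {lam : ℝ} (hlam : lam ≠ 0) (c : ℝ) :
    volume {x : ℝ × ℝ | ellipticNormSq lam x = c} = 0 := by
  rw [Measure.volume_eq_prod]
  refine measure_prod_null_of_countable_slices _ _
    (measurableSet_eq_fun (continuous_ellipticNormSq lam).measurable measurable_const) fun a => ?_
  refine (((countable_singleton (-√(c - a ^ 2))).insert √(c - a ^ 2)).image (lam * ·)).mono
    fun y hy => ?_
  have hy : (y / lam) ^ 2 = c - a ^ 2 := by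
    simp only [mem_preimage, mem_ofPred_eq, ellipticNormSq] at hy; linarith
  exact ⟨y / lam, mem_sqrt_pair_of_sq_eq hy, mul_div_cancel₀ y hlam⟩

lemma closure_ellipse0_ae_eq {lam : ℝ} (hlam : lam ≠ 0) (r : ℝ) :
    closure (ellipse0 lam r) =ᵐ[volume] ellipse0 lam r := by
  refine ae_eq_set.2 ⟨measure_mono_null (fun x hx => ?_) (volume_ellipticNormSq_eq hlam (r ^ 2)),
    by simp [sdiff_eq_empty.2 subset_closure]⟩
  exact le_antisymm (closure_ellipse0_subset lam r hx.1) (not_lt.1 hx.2)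

-- At the origin both sides are `0`, the junk value of division by zero.
lemma Wk_eq (lam mu b : ℝ) (x : ℝ × ℝ) :
    Wk lam mu b x = mu * b ^ 2 * lam ^ 2 / (8 * π ^ 2) / (lam ^ 2 * x.1 ^ 2 + x.2 ^ 2) := by
  by_cases hD : lam ^ 2 * x.1 ^ 2 + x.2 ^ 2 = 0
  · simp [Wk, kfun0, hD]
  · simp only [Wk, kfun0]
    field_simp
    ring

lemma sq_mul_ellipticNormSq {lam : ℝ} (hlam : lam ≠ 0) (x : ℝ × ℝ) :
    lam ^ 2 * ellipticNormSq lam x = lam ^ 2 * x.1 ^ 2 + x.2 ^ 2 := by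
  simp only [ellipticNormSq]
  field_simp

lemma continuousOn_Wk {lam : ℝ} (hlam : lam ≠ 0) (mu b : ℝ) :
    ContinuousOn (Wk lam mu b) {0}ᶜ := by
  rw [funext (Wk_eq lam mu b)]
  refine continuousOn_const.div (by fun_prop) fun x hx => ?_
  have hx : x.1 ≠ 0 ∨ x.2 ≠ 0 := by rw [← not_and_or]; exact fun h => hx (Prod.ext h.1 h.2)
  rcases hx with hx | hx <;> positivity

lemma integrableOn_Wk_diff_ellipse0 {lam : ℝ} (hlam : lam ≠ 0) (mu b : ℝ) {Ω : Set (ℝ × ℝ)}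
    (hΩ : Bornology.IsBounded Ω) {r : ℝ} (hr : 0 < r) :
    IntegrableOn (Wk lam mu b) (Ω \ ellipse0 lam r) := by
  have hK : IsCompact (closure Ω \ ellipse0 lam r) :=
    hΩ.isCompact_closure.diff (isOpen_ellipse0 lam r)
  refine IntegrableOn.mono_set ?_ (sdiff_subset_sdiff_left subset_closure)
  exact ((continuousOn_Wk hlam mu b).mono fun x hx h0 =>
    hx.2 (h0 ▸ zero_mem_ellipse0 hr)).integrableOn_compact hK

noncomputable def ellipticPolar (lam : ℝ) (p : ℝ × ℝ) : ℝ × ℝ :=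
  (p.1 * cos p.2, lam * (p.1 * sin p.2))

noncomputable def ellipticPolarFDeriv (lam : ℝ) (p : ℝ × ℝ) : ℝ × ℝ →L[ℝ] ℝ × ℝ :=
  LinearMap.toContinuousLinearMap
    (Matrix.toLin (Module.Basis.finTwoProd ℝ) (Module.Basis.finTwoProd ℝ)
      !![cos p.2, -p.1 * sin p.2; lam * sin p.2, lam * (p.1 * cos p.2)])

lemma hasFDerivAt_ellipticPolar (lam : ℝ) (p : ℝ × ℝ) :
    HasFDerivAt (ellipticPolar lam) (ellipticPolarFDeriv lam p) p := by
  rw [ellipticPolarFDeriv, Matrix.toLin_finTwoProd_toContinuousLinearMap]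
  convert HasFDerivAt.prodMk (𝕜 := ℝ)
    (hasFDerivAt_fst.mul ((hasDerivAt_cos p.2).comp_hasFDerivAt p hasFDerivAt_snd))
    ((hasFDerivAt_fst.mul
      ((hasDerivAt_sin p.2).comp_hasFDerivAt p hasFDerivAt_snd)).const_mul lam) using 2 <;>
  · ext <;> simp [ellipticPolar, smul_smul]

lemma det_ellipticPolarFDeriv (lam : ℝ) (p : ℝ × ℝ) :
    (ellipticPolarFDeriv lam p).det = lam * p.1 := by
  simp only [ellipticPolarFDeriv, LinearMap.det_toContinuousLinearMap, LinearMap.det_toLin,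
    Matrix.det_fin_two_of]
  linear_combination (lam * p.1) * cos_sq_add_sin_sq p.2

lemma ellipticPolar_eq (lam : ℝ) (p : ℝ × ℝ) :
    ellipticPolar lam p = ((polarCoord.symm p).1, lam * (polarCoord.symm p).2) := by
  simp [ellipticPolar, polarCoord_symm_apply]

lemma ellipticNormSq_ellipticPolar {lam : ℝ} (hlam : lam ≠ 0) (p : ℝ × ℝ) :
    ellipticNormSq lam (ellipticPolar lam p) = p.1 ^ 2 := by
  simp only [ellipticNormSq, ellipticPolar, mul_div_cancel_left₀ _ hlam]
  linear_combination p.1 ^ 2 * cos_sq_add_sin_sq p.2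

lemma injOn_ellipticPolar {lam : ℝ} (hlam : lam ≠ 0) :
    InjOn (ellipticPolar lam) polarCoord.target := by
  intro p hp p' hp' h
  rw [ellipticPolar_eq, ellipticPolar_eq, Prod.mk.injEq, mul_right_inj' hlam] at h
  rw [← polarCoord.symm_source] at hp hp'
  exact polarCoord.symm.injOn hp hp' (Prod.ext h.1 h.2)

lemma image_ellipticPolar_ae_eq {lam : ℝ} (hlam : lam ≠ 0) {R' R : ℝ} (hR' : 0 ≤ R')
    (hR'R : R' ≤ R) :
    ellipticPolar lam '' (Ioo R' R ×ˢ Ioo (-π) π) =ᵐ[volume] ellipse0 lam R \ ellipse0 lam R' := by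
  have himage :
      ellipticPolar lam '' (Ioo R' R ×ˢ Ioo (-π) π) ⊆ ellipse0 lam R \ ellipse0 lam R' := by
    rintro _ ⟨p, ⟨hr, -⟩, rfl⟩
    simp only [mem_sdiff, ellipse0_eq, mem_ofPred_eq, ellipticNormSq_ellipticPolar hlam, not_lt]
    exact ⟨pow_lt_pow_left₀ hr.2 (hR'.trans hr.1.le) two_ne_zero,
      pow_le_pow_left₀ hR' hr.1.le 2⟩
  -- the image misses only the inner boundary ellipse and the half-axis `θ = π`
  have hcover : (ellipse0 lam R \ ellipse0 lam R') \ ellipticPolar lam '' (Ioo R' R ×ˢ Ioo (-π) π)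
      ⊆ {x | ellipticNormSq lam x = R' ^ 2} ∪ univ ×ˢ {0} := by
    rintro x ⟨⟨hxR, hxR'⟩, hx⟩
    by_contra! hne
    simp only [mem_union, mem_ofPred_eq, mem_prod, mem_univ, true_and, mem_singleton_iff,
      not_or] at hne
    set y : ℝ × ℝ := (x.1, x.2 / lam)
    have hy : y ∈ polarCoord.source := Or.inr (div_ne_zero hne.2 hlam)
    have hq : (polarCoord y).1 = √(ellipticNormSq lam x) := by
      simp [polarCoord_apply, y, ellipticNormSq]
    refine hx ⟨polarCoord y, ⟨⟨?_, ?_⟩, (polarCoord.map_source hy).2⟩, ?_⟩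
    · rw [hq, lt_sqrt hR']
      exact lt_of_le_of_ne (not_lt.1 hxR') (Ne.symm hne.1)
    · rw [hq, sqrt_lt (by unfold ellipticNormSq; positivity) (hR'.trans hR'R)]
      exact hxR
    · rw [ellipticPolar_eq, polarCoord.left_inv hy, mul_div_cancel₀ _ hlam]
  have haxis : volume (univ ×ˢ {0} : Set (ℝ × ℝ)) = 0 := by
    rw [Measure.volume_eq_prod, Measure.prod_prod]; simp
  refine ae_eq_set.2 ⟨measure_mono_null (fun _ hx => absurd (himage hx.1) hx.2) measure_empty, ?_⟩
  exact measure_mono_null hcover (measure_union_null (volume_ellipticNormSq_eq hlam _) haxis)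

lemma setIntegral_Wk_ellipse0_diff {lam : ℝ} (hlam : 0 < lam) (mu b : ℝ) {R' R : ℝ} (hR' : 0 < R')
    (hR'R : R' ≤ R) :
    ∫ x in ellipse0 lam R \ ellipse0 lam R', Wk lam mu b x
      = mu * lam * b ^ 2 / (4 * π) * log (R / R') := by
  set s : Set (ℝ × ℝ) := Ioo R' R ×ˢ Ioo (-π) π
  set c : ℝ := mu * lam * b ^ 2 / (8 * π ^ 2)
  have hs : MeasurableSet s := measurableSet_Ioo.prod measurableSet_Ioo
  have hinj : InjOn (ellipticPolar lam) s :=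
    (injOn_ellipticPolar hlam.ne').mono <| by
      rw [polarCoord_target]; exact prod_mono (fun r hr => hR'.trans hr.1) subset_rfl
  have hpolar : ∀ p ∈ s,
      |(ellipticPolarFDeriv lam p).det| • Wk lam mu b (ellipticPolar lam p) = c * p.1⁻¹ * 1 := by
    rintro p ⟨hr, -⟩
    have hr0 : 0 < p.1 := hR'.trans hr.1
    rw [det_ellipticPolarFDeriv, abs_of_pos (mul_pos hlam hr0), smul_eq_mul, Wk_eq,
      ← sq_mul_ellipticNormSq hlam.ne', ellipticNormSq_ellipticPolar hlam.ne', mul_one]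
    simp only [c]
    field_simp
  calc ∫ x in ellipse0 lam R \ ellipse0 lam R', Wk lam mu b x
      = ∫ x in ellipticPolar lam '' s, Wk lam mu b x :=
        setIntegral_congr_set (image_ellipticPolar_ae_eq hlam.ne' hR'.le hR'R).symm
    _ = ∫ p in s, |(ellipticPolarFDeriv lam p).det| • Wk lam mu b (ellipticPolar lam p) :=
        integral_image_eq_integral_abs_det_fderiv_smul volume hs
          (fun p _ => (hasFDerivAt_ellipticPolar lam p).hasFDerivWithinAt) hinj _
    _ = ∫ p in s, c * p.1⁻¹ * 1 := setIntegral_congr_fun hs hpolar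
    _ = (∫ r in Ioo R' R, c * r⁻¹) * ∫ _ in Ioo (-π) π, (1 : ℝ) := by
        rw [Measure.volume_eq_prod]
        exact setIntegral_prod_mul (fun r => c * r⁻¹) (fun _ => 1) _ _
    _ = c * log (R / R') * (2 * π) := by
        rw [integral_const_mul, ← integral_Ioc_eq_integral_Ioo,
          ← intervalIntegral.integral_of_le hR'R, integral_inv_of_pos hR' (hR'.trans_le hR'R),
          setIntegral_const, volume_real_Ioo_of_le (by linarith [pi_pos])]
        simp only [smul_eq_mul, mul_one]
        ring
    _ = mu * lam * b ^ 2 / (4 * π) * log (R / R') := by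
        simp only [c]
        field_simp
        ring

lemma setIntegral_Wk_diff_ellipse0_eq_add {lam : ℝ} (hlam : 0 < lam) (mu b : ℝ)
    {Ω : Set (ℝ × ℝ)} (hΩ : Bornology.IsBounded Ω) {R' R : ℝ} (hR' : 0 < R') (hR'R : R' ≤ R)
    (hRΩ : ellipse0 lam R ⊆ Ω) :
    ∫ x in Ω \ ellipse0 lam R', Wk lam mu b x
      = (∫ x in Ω \ ellipse0 lam R, Wk lam mu b x) + mu * lam * b ^ 2 / (4 * π) * log (R / R') := by
  rw [← sdiff_union_sdiff_cancel hRΩ (ellipse0_mono hR'.le hR'R),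
    setIntegral_union (disjoint_sdiff_left.mono_right sdiff_subset)
      ((isOpen_ellipse0 lam R).measurableSet.diff (isOpen_ellipse0 lam R').measurableSet)
      (integrableOn_Wk_diff_ellipse0 hlam.ne' mu b hΩ (hR'.trans_le hR'R))
      ((integrableOn_Wk_diff_ellipse0 hlam.ne' mu b hΩ hR').mono_set
        (sdiff_subset_sdiff_left hRΩ)),
    setIntegral_Wk_ellipse0_diff hlam mu b hR' hR'R]

theorem renormalized_self_energy_R_independent_general (lam mu b : ℝ)
    (hlam : 0 < lam) :
    (∀ R' R : ℝ, 0 < R' → R' < R →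
      (∫ x in ellipse0 lam R \ closure (ellipse0 lam R'), Wk lam mu b x)
        = mu * lam * b ^ 2 / (4 * Real.pi) * Real.log (R / R'))
    ∧ ∀ (Ω : Set (ℝ × ℝ)) (R₀ : ℝ), IsOpen Ω → Bornology.IsBounded Ω → 0 < R₀ →
        closure (ellipse0 lam R₀) ⊆ Ω →
        ∀ R R' : ℝ, R ∈ Set.Ioo 0 R₀ → R' ∈ Set.Ioo 0 R₀ →
          mu * lam * b ^ 2 / (4 * Real.pi) * Real.log R
              + (∫ x in Ω \ ellipse0 lam R, Wk lam mu b x)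
            = mu * lam * b ^ 2 / (4 * Real.pi) * Real.log R'
              + ∫ x in Ω \ ellipse0 lam R', Wk lam mu b x := by
  refine ⟨fun R' R hR' hR'R => ?_, fun Ω R₀ _ hΩ _ hΩR₀ R R' hR hR' => ?_⟩
  · rw [← setIntegral_Wk_ellipse0_diff hlam mu b hR' hR'R.le]
    exact setIntegral_congr_set (ae_eq_set_sdiff ae_eq_rfl (closure_ellipse0_ae_eq hlam.ne' R'))
  · wlog hle : R' ≤ R generalizing R R'
    · exact (this R' R hR' hR (le_of_not_ge hle)).symm
    have hRΩ : ellipse0 lam R ⊆ Ω :=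
      (ellipse0_mono hR.1.le hR.2.le).trans (subset_closure.trans hΩR₀)
    rw [setIntegral_Wk_diff_ellipse0_eq_add hlam mu b hΩ hR'.1 hle hRΩ, log_div hR.1.ne' hR'.1.ne']
    ring

/-- For `0 < R' < R`, `∫_{E_R(0)\closure(E_{R'}(0))} W(k) dx = (μλb²/4π) log(R/R')`;
consequently, for bounded open `Ω ⊇ closure(E_{R₀}(0))`, the quantity
`(μλb²/4π) log R + ∫_{Ω \ E_R(0)} W(k) dx` does not depend on `R ∈ (0, R₀)`. -/
theorem renormalized_self_energy_R_independent (lam mu b : ℝ)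
    (hlam : 0 < lam) (hmu : 0 < mu) :
    (∀ R' R : ℝ, 0 < R' → R' < R →
      (∫ x in ellipse0 lam R \ closure (ellipse0 lam R'), Wk lam mu b x)
        = mu * lam * b ^ 2 / (4 * Real.pi) * Real.log (R / R'))
    ∧ ∀ (Ω : Set (ℝ × ℝ)) (R₀ : ℝ), IsOpen Ω → Bornology.IsBounded Ω → 0 < R₀ →
        closure (ellipse0 lam R₀) ⊆ Ω →
        ∀ R R' : ℝ, R ∈ Set.Ioo 0 R₀ → R' ∈ Set.Ioo 0 R₀ →
          mu * lam * b ^ 2 / (4 * Real.pi) * Real.log R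
              + (∫ x in Ω \ ellipse0 lam R, Wk lam mu b x)
            = mu * lam * b ^ 2 / (4 * Real.pi) * Real.log R'
              + ∫ x in Ω \ ellipse0 lam R', Wk lam mu b x :=
  renormalized_self_energy_R_independent_general lam mu b hlam
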